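/- In the q-shuffle algebra V on letters x, y, for every natural number n, (−1)^n [2]_q^{2n+1} · x(yyxx)^n y = (1 − q^{-2})^{-1} Σ_{k=0}^{2n} (−1)^k ( q · W_{k−2n} ⋆ W_{k+1} − q^{-1} · W_{k+1} ⋆ W_{k−2n} ), where for integers m ≤ 0, W_m = (xy)^{−m} x, for m ≥ 1, W_m = (yx)^{m−1} y (concatenation), and [2]_q = q + q^{-1}. -/
import Mathlib


noncomputable section

/-- The letter `x`. -/
def bX : Bool := false
/-- The letter `y`. -/
def bY : Bool := true

/-- The bilinear pairing on letters: `⟨x,x⟩ = ⟨y,y⟩ = 2`, `⟨x,y⟩ = ⟨y,x⟩ = -2`. -/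
def qbr (a b : Bool) : ℤ := if a = b then 2 else -2

/-- The sum `⟨a, w₁⟩ + ⋯ + ⟨a, wₙ⟩` for a letter `a` and a word `w`. -/
def qE (a : Bool) (w : List Bool) : ℤ := (w.map (qbr a)).sum

/-- Linear map on the free algebra (words-indexed finsupps) given by prepending a letter. -/
def qcons (F : Type*) [Field F] (a : Bool) :
    (List Bool →₀ F) →ₗ[F] (List Bool →₀ F) :=
  Finsupp.lmapDomain F F (List.cons a)

/-- The q-shuffle product of two words, as an element of the free algebra `List Bool →₀ F`.
Defined by the recursion `u ⋆ v = u₁((u₂⋯u_r) ⋆ v) + q^{⟨v₁,u₁⟩+⋯+⟨v₁,u_r⟩} v₁(u ⋆ (v₂⋯v_s))`. -/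
def qsh {F : Type*} [Field F] (q : F) : List Bool → List Bool → (List Bool →₀ F)
  | [], v => Finsupp.single v 1
  | a :: u, [] => Finsupp.single (a :: u) 1
  | a :: u, b :: v =>
      qcons F a (qsh q u (b :: v)) +
        (q ^ (qbr b a + qE b u)) • qcons F b (qsh q (a :: u) v)
  termination_by u v => u.length + v.length
  decreasing_by all_goals (simp only [List.length_cons]; omega)

/-- Concatenation power of a word. -/
def wpow (w : List Bool) : ℕ → List Bool
  | 0 => []
  | n + 1 => w ++ wpow w n

def wXXYY : List Bool := [bX, bX, bY, bY]
def wYYXX : List Bool := [bY, bY, bX, bX]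
def wXY : List Bool := [bX, bY]
def wYX : List Bool := [bY, bX]

namespace Stmt19

variable {F : Type*} [Field F]

lemma zmod4_cases (r : ZMod 4) : r = 0 ∨ r = 1 ∨ r = 2 ∨ r = 3 := by revert r; decide

/-- Alternating word of length `n` starting with letter `b`. -/
def alt : Bool → ℕ → List Bool
  | _, 0 => []
  | b, n + 1 => b :: alt (!b) n

/-- Next letter to be consumed from the second (v) word, given `cv mod 4`. -/
def nxV (r : ZMod 4) : Bool := decide (r = 0 ∨ r = 2)

/-- Sign attached to `cv mod 4`: `+1` at `1`, `-1` at `3`, `0` at evens. -/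
def ind (F : Type*) [Field F] (r : ZMod 4) : F :=
  if r = 1 then 1 else if r = 3 then -1 else 0

def iE (F : Type*) [Field F] (r : ZMod 4) : F :=
  if r = 0 then 1 else if r = 2 then -1 else 0

lemma nxV_not (r : ZMod 4) : (!(nxV r)) = nxV (r + 1) := by revert r; decide

lemma valsucc (r : ZMod 4) : (r + 1).val % 2 = (r.val + 1) % 2 := by revert r; decide

lemma ind_eq_zero {r : ZMod 4} (h : ¬(r = 1 ∨ r = 3)) : ind F r = 0 := by
  rcases zmod4_cases r with rfl|rfl|rfl|rfl <;> simp_all [ind]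

lemma ind_cases (r : ZMod 4) : (r = 1 ∨ r = 3) ∨ ind F r = 0 := by
  by_cases h : r = 1 ∨ r = 3
  · exact Or.inl h
  · exact Or.inr (ind_eq_zero h)

lemma qE_cons (b a : Bool) (u : List Bool) : qE b (a :: u) = qbr b a + qE b u := by
  simp [qE]

lemma qbr_not (b a : Bool) : qbr b a + qbr b (!a) = 0 := by
  cases a <;> cases b <;> simp [qbr]

lemma qE_alt (b : Bool) : ∀ (m : ℕ) (a : Bool),
    qE b (alt a m) = if m % 2 = 1 then qbr b a else 0 := by
  intro m
  induction m with
  | zero => intro a; simp [alt, qE]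
  | succ m ih =>
    intro a
    rw [alt, qE_cons, ih (!a)]
    rcases Nat.even_or_odd m with h | h
    · obtain ⟨t, rfl⟩ := h
      rw [if_neg (by omega), if_pos (by omega), add_zero]
    · obtain ⟨t, rfl⟩ := h
      rw [if_pos (by omega), if_neg (by omega)]
      have := qbr_not b a
      omega

end Stmt19
namespace Stmt19
variable {F : Type*} [Field F]

lemma qcons_apply_cons (a : Bool) (f : List Bool →₀ F) (c : Bool) (w : List Bool) :
    qcons F a f (c :: w) = if c = a then f w else 0 := by
  by_cases h : c = a
  · subst h
    rw [if_pos rfl]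
    exact Finsupp.mapDomain_apply (fun x y hxy => by injection hxy) f w
  · rw [if_neg h]
    refine Finsupp.mapDomain_notin_range _ _ ?_
    rintro ⟨l, hl⟩
    injection hl with h1 h2
    exact h h1.symm

lemma qcons_apply_nil (a : Bool) (f : List Bool →₀ F) :
    qcons F a f [] = 0 := by
  refine Finsupp.mapDomain_notin_range _ _ ?_
  rintro ⟨l, hl⟩
  injection hl

lemma qsh_nil_left (q : F) (v : List Bool) : qsh q [] v = Finsupp.single v 1 := by
  cases v <;> rw [qsh]

lemma qsh_nil_right (q : F) (u : List Bool) : qsh q u [] = Finsupp.single u 1 := by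
  cases u <;> rw [qsh]

lemma qsh_apply_cons (q : F) (u v : List Bool) (c : Bool) (w : List Bool) :
    qsh q u v (c :: w) =
      (match u with
        | [] => 0
        | a :: u' => if c = a then qsh q u' v w else 0) +
      (match v with
        | [] => 0
        | b :: v' => if c = b then q ^ qE b u * qsh q u v' w else 0) := by
  match u, v with
  | [], [] =>
    simp [qsh, Finsupp.single_apply]
  | [], b :: v' =>
    rw [qsh_nil_left]
    by_cases hb : c = b
    · subst hb
      simp only [Finsupp.single_apply, qsh_nil_left]
      have : qE c ([] : List Bool) = 0 := by simp [qE]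
      rw [this]
      simp [List.cons.injEq, eq_comm]
    · simp only [Finsupp.single_apply]
      rw [if_neg (by simp [List.cons.injEq]; intro h; exact absurd h.symm hb)]
      simp [hb]
  | a :: u', [] =>
    rw [qsh_nil_right]
    by_cases ha : c = a
    · subst ha
      simp only [Finsupp.single_apply, qsh_nil_right]
      simp [List.cons.injEq, eq_comm]
    · simp only [Finsupp.single_apply]
      rw [if_neg (by simp [List.cons.injEq]; intro h; exact absurd h.symm ha)]
      simp [ha]
  | a :: u', b :: v' =>
    rw [qsh]
    simp only [Finsupp.add_apply, Finsupp.smul_apply, qcons_apply_cons, smul_ite, smul_zero]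
    rw [qE_cons]
    by_cases hb : c = b <;> simp [hb, smul_eq_mul]

lemma qsh_apply_ne (q : F) : ∀ (w u v : List Bool),
    w.length ≠ u.length + v.length → qsh q u v w = 0 := by
  intro w
  induction w with
  | nil =>
    intro u v h
    match u, v with
    | [], [] => simp at h
    | [], b :: v' => rw [qsh_nil_left]; simp [Finsupp.single_apply]
    | a :: u', [] => rw [qsh_nil_right]; simp [Finsupp.single_apply]
    | a :: u', b :: v' =>
      rw [qsh]
      simp [Finsupp.add_apply, Finsupp.smul_apply, qcons_apply_nil]
  | cons c w ih =>
    intro u v h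
    rw [qsh_apply_cons]
    have h1 : (match u with
        | [] => (0:F)
        | a :: u' => if c = a then qsh q u' v w else 0) = 0 := by
      match u with
      | [] => rfl
      | a :: u' =>
        show (if c = a then qsh q u' v w else 0) = 0
        rw [ih u' v (by simp at h ⊢; omega)]
        simp
    have h2 : (match v with
        | [] => (0:F)
        | b :: v' => if c = b then q ^ qE b u * qsh q u v' w else 0) = 0 := by
      match v with
      | [] => rfl
      | b :: v' =>
        show (if c = b then q ^ qE b u * qsh q u v' w else 0) = 0
        rw [ih u v' (by simp at h ⊢; omega)]
        simp
    rw [h1, h2, add_zero]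

/-- State function tracking the `u ⋆ v` side. -/
def psi1 (q : F) : List Bool → Bool → ZMod 4 → F
  | [], p, r => if p then ind F r else 0
  | c :: w, p, r =>
      (if c = p then psi1 q w (!p) r else 0) +
      (if c = nxV r then (if p then 1 else q ^ qbr c bX) * psi1 q w p (r + 1) else 0)

/-- State function tracking the `v ⋆ u` side. -/
def psi2 (q : F) : List Bool → Bool → ZMod 4 → F
  | [], p, r => if p then ind F r else 0
  | c :: w, p, r =>
      (if c = p then (if r = 0 ∨ r = 2 then q ^ qbr c bY else 1) * psi2 q w (!p) r else 0) +
      (if c = nxV r then psi2 q w p (r + 1) else 0)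

end Stmt19
namespace Stmt19
variable {F : Type*} [Field F]

def m1 (q : F) (c : Bool) (V w : List Bool) : List Bool → F
  | [] => 0
  | a :: u' => if c = a then qsh q u' V w else 0

def m2 (q : F) (c : Bool) (U w : List Bool) : List Bool → F
  | [] => 0
  | b :: v' => if c = b then q ^ qE b U * qsh q U v' w else 0

lemma qsh_apply_cons' (q : F) (u v : List Bool) (c : Bool) (w : List Bool) :
    qsh q u v (c :: w) = m1 q c v w u + m2 q c u w v := by
  rw [qsh_apply_cons]
  cases u <;> cases v <;> rfl

lemma val1 : ((1 : ZMod 4)).val = 1 := rfl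
lemma val3 : ((3 : ZMod 4)).val = 3 := rfl
lemma val0 : ((0 : ZMod 4)).val = 0 := rfl

lemma lemA1 (q : F) : ∀ (w : List Bool) (p : Bool) (r : ZMod 4),
    (w.length + (if p then 1 else 0) + r.val) % 2 = 0 →
    ∑ j ∈ Finset.range (w.length + 1),
      ind F (r + (j : ZMod 4)) * qsh q (alt p (w.length - j)) (alt (nxV r) j) w
      = psi1 q w p r := by
  intro w
  induction w with
  | nil =>
    intro p r hpar
    rw [show ([] : List Bool).length + 1 = 1 from rfl, Finset.sum_range_one,
      Nat.cast_zero, add_zero]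
    rw [show alt p (([] : List Bool).length - 0) = [] from rfl,
      show alt (nxV r) 0 = [] from rfl, qsh_nil_left]
    rw [Finsupp.single_apply, if_pos rfl, mul_one, psi1]
    cases p with
    | true => rw [if_pos rfl]
    | false =>
      rw [if_neg (by decide)]
      apply ind_eq_zero
      simp only [List.length_nil, Bool.false_eq_true, if_false] at hpar
      rintro (rfl | rfl)
      · rw [val1] at hpar; omega
      · rw [val3] at hpar; omega
  | cons c w ih =>
    intro p r hpar
    simp only [List.length_cons] at hpar ⊢
    have key : ∀ j ∈ Finset.range (w.length + 1 + 1),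
        ind F (r + (j:ZMod 4)) * qsh q (alt p (w.length + 1 - j)) (alt (nxV r) j) (c :: w)
        = ind F (r + (j:ZMod 4)) * m1 q c (alt (nxV r) j) w (alt p (w.length + 1 - j))
          + ind F (r + (j:ZMod 4)) * m2 q c (alt p (w.length + 1 - j)) w (alt (nxV r) j) :=
      fun j _ => by rw [qsh_apply_cons', mul_add]
    rw [Finset.sum_congr rfl key, Finset.sum_add_distrib]
    have S1 : ∑ j ∈ Finset.range (w.length + 1 + 1),
        ind F (r + (j:ZMod 4)) * m1 q c (alt (nxV r) j) w (alt p (w.length + 1 - j))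
        = if c = p then psi1 q w (!p) r else 0 := by
      rw [Finset.sum_range_succ]
      have hlast : alt p (w.length + 1 - (w.length + 1)) = [] := by
        rw [Nat.sub_self]
        rfl
      rw [hlast]

      rw [show m1 q c (alt (nxV r) (w.length+1)) w [] = 0 from rfl, mul_zero, add_zero]
      have step : ∀ j ∈ Finset.range (w.length + 1),
          ind F (r + (j:ZMod 4)) * m1 q c (alt (nxV r) j) w (alt p (w.length + 1 - j))
          = ind F (r + (j:ZMod 4)) *
              (if c = p then qsh q (alt (!p) (w.length - j)) (alt (nxV r) j) w else 0) := by
        intro j hj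
        have hjL : j < w.length + 1 := Finset.mem_range.mp hj
        have h1 : w.length + 1 - j = (w.length - j) + 1 := by omega
        rw [h1, alt]
        rfl
      rw [Finset.sum_congr rfl step]
      by_cases hc : c = p
      · simp only [if_pos hc]
        exact ih (!p) r (by cases p <;> simp at hpar ⊢ <;> omega)
      · simp [hc]
    have S2 : ∑ j ∈ Finset.range (w.length + 1 + 1),
        ind F (r + (j:ZMod 4)) * m2 q c (alt p (w.length + 1 - j)) w (alt (nxV r) j)
        = if c = nxV r then
            (if p then 1 else q ^ qbr c bX) * psi1 q w p (r + 1) else 0 := by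
      rw [Finset.sum_range_succ']
      rw [show alt (nxV r) 0 = [] from rfl]
      rw [show m2 q c (alt p (w.length + 1 - 0)) w [] = 0 from rfl, mul_zero, add_zero]
      by_cases hc2 : c = nxV r
      · subst hc2
        simp only [if_pos rfl]
        have step : ∀ j ∈ Finset.range (w.length + 1),
            ind F (r + ((j+1 : ℕ):ZMod 4)) *
              m2 q (nxV r) (alt p (w.length + 1 - (j+1))) w (alt (nxV r) (j+1))
            = (if p then 1 else q ^ qbr (nxV r) bX) *
              (ind F ((r+1) + (j:ZMod 4)) *
                qsh q (alt p (w.length - j)) (alt (nxV (r+1)) j) w) := by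
          intro j hj
          have hjL : j < w.length + 1 := Finset.mem_range.mp hj
          have hsub : w.length + 1 - (j+1) = w.length - j := by omega
          have hcast : ((j+1 : ℕ):ZMod 4) = (j:ZMod 4) + 1 := by push_cast; ring
          have hrr : r + ((j+1 : ℕ):ZMod 4) = (r+1) + (j:ZMod 4) := by rw [hcast]; ring
          rw [hsub, alt, nxV_not]
          rw [show m2 q (nxV r) (alt p (w.length - j)) w
              (nxV r :: alt (nxV (r+1)) j)
            = if nxV r = nxV r then
                q ^ qE (nxV r) (alt p (w.length - j)) *
                  qsh q (alt p (w.length - j)) (alt (nxV (r+1)) j) w else 0 from rfl,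
            if_pos rfl, hrr]
          rcases ind_cases (F := F) ((r+1) + (j:ZMod 4)) with h13 | h0
          · have hval : ((r+1) + (j:ZMod 4)).val % 2 = ((r+1).val + j) % 2 := by
              rw [ZMod.val_add, ZMod.val_natCast]; omega
            have hj1 : ((r+1).val + j) % 2 = 1 := by
              rcases h13 with h | h <;> rw [h] at hval
              · rw [val1] at hval; omega
              · rw [val3] at hval; omega
            have hv2 : (r+1).val % 2 = (r.val + 1) % 2 := valsucc r
            rw [qE_alt]
            cases p
            · have hm : (w.length - j) % 2 = 1 := by
                rw [show (if (false:Bool) = true then 1 else 0) = 0 from rfl] at hpar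
                omega
              rw [if_pos hm]
              rw [show (bX : Bool) = false from rfl]
              rw [show (if (false:Bool) = true then (1:F) else q ^ qbr (nxV r) false)
                  = q ^ qbr (nxV r) false from rfl]
              ring
            · have hm : (w.length - j) % 2 = 0 := by
                rw [show (if (true:Bool) = true then 1 else 0) = 1 from rfl] at hpar
                omega
              rw [if_neg (by omega), zpow_zero]
              rw [show (if (true:Bool) = true then (1:F) else q ^ qbr (nxV r) bX)
                  = 1 from rfl]
              ring
          · rw [h0]; ring
        rw [Finset.sum_congr rfl step, ← Finset.mul_sum]
        congr 1
        exact ih p (r+1) (by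
          have hv2 : (r+1).val % 2 = (r.val + 1) % 2 := valsucc r
          cases p <;> simp at hpar ⊢ <;> omega)
      · simp only [if_neg hc2]
        apply Finset.sum_eq_zero
        intro j hj
        rw [alt]
        rw [show m2 q c (alt p (w.length + 1 - (j+1))) w (nxV r :: alt (!(nxV r)) j)
          = if c = nxV r then
              q ^ qE (nxV r) (alt p (w.length + 1 - (j+1))) *
                qsh q (alt p (w.length + 1 - (j+1))) (alt (!(nxV r)) j) w else 0 from rfl]
        rw [if_neg hc2, mul_zero]
    rw [S1, S2]
    rw [psi1]

end Stmt19
namespace Stmt19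
variable {F : Type*} [Field F]

lemma val2 : ((2 : ZMod 4)).val = 2 := rfl

lemma lemA2 (q : F) : ∀ (w : List Bool) (p : Bool) (r : ZMod 4),
    (w.length + (if p then 1 else 0) + r.val) % 2 = 0 →
    ∑ j ∈ Finset.range (w.length + 1),
      ind F (r + (j : ZMod 4)) * qsh q (alt (nxV r) j) (alt p (w.length - j)) w
      = psi2 q w p r := by
  intro w
  induction w with
  | nil =>
    intro p r hpar
    rw [show ([] : List Bool).length + 1 = 1 from rfl, Finset.sum_range_one,
      Nat.cast_zero, add_zero]
    rw [show alt p (([] : List Bool).length - 0) = [] from rfl,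
      show alt (nxV r) 0 = [] from rfl, qsh_nil_left]
    rw [Finsupp.single_apply, if_pos rfl, mul_one, psi2]
    cases p with
    | true => rw [if_pos rfl]
    | false =>
      rw [if_neg (by decide)]
      apply ind_eq_zero
      simp only [List.length_nil, Bool.false_eq_true, if_false] at hpar
      rintro (rfl | rfl)
      · rw [val1] at hpar; omega
      · rw [val3] at hpar; omega
  | cons c w ih =>
    intro p r hpar
    simp only [List.length_cons] at hpar ⊢
    have key : ∀ j ∈ Finset.range (w.length + 1 + 1),
        ind F (r + (j:ZMod 4)) * qsh q (alt (nxV r) j) (alt p (w.length + 1 - j)) (c :: w)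
        = ind F (r + (j:ZMod 4)) * m1 q c (alt p (w.length + 1 - j)) w (alt (nxV r) j)
          + ind F (r + (j:ZMod 4)) * m2 q c (alt (nxV r) j) w (alt p (w.length + 1 - j)) :=
      fun j _ => by rw [qsh_apply_cons', mul_add]
    rw [Finset.sum_congr rfl key, Finset.sum_add_distrib]
    have S1 : ∑ j ∈ Finset.range (w.length + 1 + 1),
        ind F (r + (j:ZMod 4)) * m1 q c (alt p (w.length + 1 - j)) w (alt (nxV r) j)
        = if c = nxV r then psi2 q w p (r + 1) else 0 := by
      rw [Finset.sum_range_succ']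
      rw [show alt (nxV r) 0 = [] from rfl]
      rw [show m1 q c (alt p (w.length + 1 - 0)) w [] = 0 from rfl, mul_zero, add_zero]
      have step : ∀ j ∈ Finset.range (w.length + 1),
          ind F (r + ((j+1 : ℕ):ZMod 4)) *
            m1 q c (alt p (w.length + 1 - (j+1))) w (alt (nxV r) (j+1))
          = ind F ((r+1) + (j:ZMod 4)) *
            (if c = nxV r then qsh q (alt (nxV (r+1)) j) (alt p (w.length - j)) w else 0) := by
        intro j hj
        have hsub : w.length + 1 - (j+1) = w.length - j := by omega
        have hcast : ((j+1 : ℕ):ZMod 4) = (j:ZMod 4) + 1 := by push_cast; ring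
        have hrr : r + ((j+1 : ℕ):ZMod 4) = (r+1) + (j:ZMod 4) := by rw [hcast]; ring
        rw [hsub, alt, nxV_not, hrr]
        rfl
      rw [Finset.sum_congr rfl step]
      by_cases hc : c = nxV r
      · simp only [if_pos hc]
        exact ih p (r+1) (by
          have hv2 : (r+1).val % 2 = (r.val + 1) % 2 := valsucc r
          cases p <;> simp at hpar ⊢ <;> omega)
      · simp [hc]
    have S2 : ∑ j ∈ Finset.range (w.length + 1 + 1),
        ind F (r + (j:ZMod 4)) * m2 q c (alt (nxV r) j) w (alt p (w.length + 1 - j))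
        = if c = p then
            (if r = 0 ∨ r = 2 then q ^ qbr c bY else 1) * psi2 q w (!p) r else 0 := by
      rw [Finset.sum_range_succ]
      have hlast : alt p (w.length + 1 - (w.length + 1)) = [] := by
        rw [Nat.sub_self]; rfl
      rw [hlast]
      rw [show m2 q c (alt (nxV r) (w.length+1)) w [] = 0 from rfl, mul_zero, add_zero]
      by_cases hc : c = p
      · subst hc
        simp only [if_pos rfl]
        have step : ∀ j ∈ Finset.range (w.length + 1),
            ind F (r + (j:ZMod 4)) * m2 q c (alt (nxV r) j) w (alt c (w.length + 1 - j))
            = (if r = 0 ∨ r = 2 then q ^ qbr c bY else 1) *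
              (ind F (r + (j:ZMod 4)) *
                qsh q (alt (nxV r) j) (alt (!c) (w.length - j)) w) := by
          intro j hj
          have hjL : j < w.length + 1 := Finset.mem_range.mp hj
          have h1 : w.length + 1 - j = (w.length - j) + 1 := by omega
          rw [h1, alt]
          rw [show m2 q c (alt (nxV r) j) w (c :: alt (!c) (w.length - j))
            = if c = c then q ^ qE c (alt (nxV r) j) *
                qsh q (alt (nxV r) j) (alt (!c) (w.length - j)) w else 0 from rfl,
            if_pos rfl]
          rcases ind_cases (F := F) (r + (j:ZMod 4)) with h13 | h0
          · have hval : (r + (j:ZMod 4)).val % 2 = (r.val + j) % 2 := by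
              rw [ZMod.val_add, ZMod.val_natCast]; omega
            have hj1 : (r.val + j) % 2 = 1 := by
              rcases h13 with h | h <;> rw [h] at hval
              · rw [val1] at hval; omega
              · rw [val3] at hval; omega
            rw [qE_alt]
            by_cases hr : r = 0 ∨ r = 2
            · have hrv : r.val % 2 = 0 := by
                rcases hr with rfl | rfl
                · rw [val0]
                · rw [val2]
              rw [if_pos (by omega), if_pos hr]
              have : nxV r = bY := by
                rcases hr with rfl | rfl <;> rfl
              rw [this]
              ring
            · have hr13 : r = 1 ∨ r = 3 := by
                rcases zmod4_cases r with rfl | rfl | rfl | rfl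
                · exact absurd (Or.inl rfl) hr
                · exact Or.inl rfl
                · exact absurd (Or.inr rfl) hr
                · exact Or.inr rfl
              have hrv : r.val % 2 = 1 := by
                rcases hr13 with rfl | rfl
                · rw [val1]
                · rw [val3]
              rw [if_neg (by omega), zpow_zero, if_neg hr]
              ring
          · rw [h0]; ring
        rw [Finset.sum_congr rfl step, ← Finset.mul_sum]
        congr 1
        exact ih (!c) r (by cases c <;> simp at hpar ⊢ <;> omega)
      · simp only [if_neg hc]
        apply Finset.sum_eq_zero
        intro j hj
        have hjL : j < w.length + 1 := Finset.mem_range.mp hj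
        have h1 : w.length + 1 - j = (w.length - j) + 1 := by omega
        rw [h1, alt]
        rw [show m2 q c (alt (nxV r) j) w (p :: alt (!p) (w.length - j))
          = if c = p then q ^ qE p (alt (nxV r) j) *
              qsh q (alt (nxV r) j) (alt (!p) (w.length - j)) w else 0 from rfl,
          if_neg hc, mul_zero]
    rw [S1, S2, psi2]
    ring

end Stmt19
namespace Stmt19
variable {F : Type*} [Field F]

def gam (q : F) : F := -(q + q⁻¹)^2

def letX (i : ℕ) : Bool := decide (i % 4 ≤ 1)

def chainX : ℕ → List Bool
  | 0 => []
  | l + 1 => letX (l + 1) :: chainX l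

def chainY : ℕ → List Bool
  | 0 => []
  | l + 1 => (!letX (l + 1)) :: chainY l

def PX1 (q : F) : ℕ → Bool → ZMod 4 → F
  | 0 => fun _ _ => 0
  | 1 => fun p r => if p then iE F r else 0
  | 2 => fun p r => if p then -ind F r else iE F r
  | 3 => fun p r => if p then 0 else -((q^2+1) * ind F r)
  | 4 => fun p r => if p then -((q^2+1) * ind F r) else -((1+(q⁻¹)^2) * iE F r)
  | l + 5 => fun p r => gam q * PX1 q (l + 1) p r

def PX2 (q : F) : ℕ → Bool → ZMod 4 → F
  | 0 => fun _ _ => 0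
  | 1 => fun p r => if p then iE F r else 0
  | 2 => fun p r => if p then -ind F r else (q⁻¹)^2 * iE F r
  | 3 => fun p r => if p then 0 else -((1+(q⁻¹)^2) * ind F r)
  | 4 => fun p r => if p then -((1+(q⁻¹)^2) * ind F r) else -((1+(q⁻¹)^2) * iE F r)
  | l + 5 => fun p r => gam q * PX2 q (l + 1) p r

def PY1 (q : F) : ℕ → Bool → ZMod 4 → F
  | 0 => fun _ _ => 0
  | 1 => fun p r => if p then 0 else ind F r
  | 2 => fun p r => if p then ind F r else (q⁻¹)^2 * iE F r
  | 3 => fun p r => if p then (1+(q⁻¹)^2) * iE F r else 0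
  | 4 => fun p r => if p then -((1+(q⁻¹)^2) * ind F r) else (1+(q⁻¹)^2) * iE F r
  | l + 5 => fun p r => gam q * PY1 q (l + 1) p r

def PY2 (q : F) : ℕ → Bool → ZMod 4 → F
  | 0 => fun _ _ => 0
  | 1 => fun p r => if p then 0 else ind F r
  | 2 => fun p r => if p then ind F r else iE F r
  | 3 => fun p r => if p then (q^2+1) * iE F r else 0
  | 4 => fun p r => if p then -((q^2+1) * ind F r) else (1+(q⁻¹)^2) * iE F r
  | l + 5 => fun p r => gam q * PY2 q (l + 1) p r

lemma zpow_two' (q : F) : q ^ (2:ℤ) = q^2 := by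
  rw [show (2:ℤ) = ((2:ℕ):ℤ) by norm_num, zpow_natCast]

lemma zpow_neg_two' (q : F) : q ^ (-2:ℤ) = (q⁻¹)^2 := by
  rw [show (-2:ℤ) = -((2:ℕ):ℤ) by norm_num, zpow_neg, zpow_natCast, inv_pow]

lemma ind0 : ind F 0 = 0 := by rw [ind, if_neg (by decide), if_neg (by decide)]
lemma ind1 : ind F 1 = 1 := by rw [ind, if_pos rfl]
lemma ind2 : ind F 2 = 0 := by rw [ind, if_neg (by decide), if_neg (by decide)]
lemma ind3 : ind F 3 = -1 := by rw [ind, if_neg (by decide), if_pos rfl]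
lemma iE0 : iE F 0 = 1 := by rw [iE, if_pos rfl]
lemma iE1 : iE F 1 = 0 := by rw [iE, if_neg (by decide), if_neg (by decide)]
lemma iE2 : iE F 2 = -1 := by rw [iE, if_neg (by decide), if_pos rfl]
lemma iE3 : iE F 3 = 0 := by rw [iE, if_neg (by decide), if_neg (by decide)]
lemma nxV0 : nxV 0 = true := rfl
lemma nxV1 : nxV 1 = false := rfl
lemma nxV2 : nxV 2 = true := rfl
lemma nxV3 : nxV 3 = false := rfl
lemma z4a : (0:ZMod 4)+1 = 1 := by decide
lemma z4b : (1:ZMod 4)+1 = 2 := by decide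
lemma z4c : (2:ZMod 4)+1 = 3 := by decide
lemma z4d : (3:ZMod 4)+1 = 0 := by decide

lemma relX1_base1 (q : F) (hq : q ≠ 0) (c p : Bool) (r : ZMod 4) :
    (if c = p then PX1 q 1 (!p) r else 0) +
    (if c = nxV r then (if p then 1 else q ^ qbr c bX) * PX1 q 1 p (r + 1) else 0)
    = if c = letX (1 + 1) then PX1 q (1 + 1) p r else 0 := by
  rcases c <;> rcases p <;> rcases zmod4_cases r with rfl|rfl|rfl|rfl <;>
    simp [PX1, letX, nxV0, nxV1, nxV2, nxV3, z4a, z4b, z4c, z4d,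
      ind0, ind1, ind2, ind3, iE0, iE1, iE2, iE3, bX, bY, qbr,
      zpow_two', zpow_neg_two'] <;>
    field_simp

end Stmt19
namespace Stmt19
variable {F : Type*} [Field F]

lemma letX_per (i : ℕ) : letX (i + 4) = letX i := by
  unfold letX
  rw [Nat.add_mod_right]

lemma ite_pull (P : Prop) [Decidable P] (a b : F) :
    (if P then a * b else 0) = a * (if P then b else 0) := by split <;> simp

lemma relX1_base (q : F) (hq : q ≠ 0) (l : ℕ)
    (hl : l = 1 ∨ l = 2 ∨ l = 3 ∨ l = 4) (c p : Bool) (r : ZMod 4) :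
    (if c = p then PX1 q l (!p) r else 0) +
    (if c = nxV r then (if p then 1 else q ^ qbr c bX) * PX1 q l p (r + 1) else 0)
    = if c = (letX (l+1)) then PX1 q (l + 1) p r else 0 := by
  rcases hl with rfl|rfl|rfl|rfl <;> rcases c <;> rcases p <;>
    rcases zmod4_cases r with rfl|rfl|rfl|rfl <;>
    (try simp (config := { decide := true }) [PX1, gam, nxV0, nxV1, nxV2, nxV3, z4a, z4b, z4c, z4d,
      ind0, ind1, ind2, ind3, iE0, iE1, iE2, iE3, bX, bY, qbr, letX,
      zpow_two', zpow_neg_two']) <;> (try field_simp) <;> (try ring) <;> (try norm_num)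

lemma relX1 (q : F) (hq : q ≠ 0) : ∀ l, 1 ≤ l → ∀ (c p : Bool) (r : ZMod 4),
    (if c = p then PX1 q l (!p) r else 0) +
    (if c = nxV r then (if p then 1 else q ^ qbr c bX) * PX1 q l p (r + 1) else 0)
    = if c = (letX (l+1)) then PX1 q (l + 1) p r else 0 := by
  intro l
  induction l using Nat.strong_induction_on with
  | _ l ihl =>
    intro hl c p r
    have h14 : l = 1 ∨ l = 2 ∨ l = 3 ∨ l = 4 ∨ 5 ≤ l := by omega
    rcases h14 with h|h|h|h|h5
    · exact relX1_base q hq l (by omega) c p r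
    · exact relX1_base q hq l (by omega) c p r
    · exact relX1_base q hq l (by omega) c p r
    · exact relX1_base q hq l (by omega) c p r
    · obtain ⟨m, rfl⟩ : ∃ m, l = m + 5 := ⟨l - 5, by omega⟩
      have IH := ihl (m+1) (by omega) (by omega) c p r
      have e5a : ∀ (p' : Bool) (r' : ZMod 4), PX1 q (m+5) p' r' = gam q * PX1 q (m+1) p' r' := fun _ _ => rfl
      have e5b : ∀ (p' : Bool) (r' : ZMod 4), PX1 q (m+5+1) p' r' = gam q * PX1 q (m+1+1) p' r' := fun _ _ => rfl
      have eL : (letX (m+5+1)) = (letX (m+1+1)) := by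
        rw [show m+5+1 = (m+1+1)+4 from rfl, letX_per]
      rw [eL]
      simp only [e5a, e5b]
      have e2 : (if c = nxV r then (if p = true then 1 else q ^ qbr c bX) * (gam q * PX1 q (m+1) p (r+1)) else 0)
          = gam q * (if c = nxV r then (if p = true then 1 else q ^ qbr c bX) * PX1 q (m+1) p (r+1) else 0) := by
        split <;> ring
      rw [ite_pull, e2, ← mul_add, IH, ite_pull]

lemma relX2_base (q : F) (hq : q ≠ 0) (l : ℕ)
    (hl : l = 1 ∨ l = 2 ∨ l = 3 ∨ l = 4) (c p : Bool) (r : ZMod 4) :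
    (if c = p then (if r = 0 ∨ r = 2 then q ^ qbr c bY else 1) * PX2 q l (!p) r else 0) +
    (if c = nxV r then PX2 q l p (r + 1) else 0)
    = if c = (letX (l+1)) then PX2 q (l + 1) p r else 0 := by
  rcases hl with rfl|rfl|rfl|rfl <;> rcases c <;> rcases p <;>
    rcases zmod4_cases r with rfl|rfl|rfl|rfl <;>
    (try simp (config := { decide := true }) [PX2, gam, nxV0, nxV1, nxV2, nxV3, z4a, z4b, z4c, z4d,
      ind0, ind1, ind2, ind3, iE0, iE1, iE2, iE3, bX, bY, qbr, letX,
      zpow_two', zpow_neg_two']) <;> (try field_simp) <;> (try ring) <;> (try norm_num)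

lemma relX2 (q : F) (hq : q ≠ 0) : ∀ l, 1 ≤ l → ∀ (c p : Bool) (r : ZMod 4),
    (if c = p then (if r = 0 ∨ r = 2 then q ^ qbr c bY else 1) * PX2 q l (!p) r else 0) +
    (if c = nxV r then PX2 q l p (r + 1) else 0)
    = if c = (letX (l+1)) then PX2 q (l + 1) p r else 0 := by
  intro l
  induction l using Nat.strong_induction_on with
  | _ l ihl =>
    intro hl c p r
    have h14 : l = 1 ∨ l = 2 ∨ l = 3 ∨ l = 4 ∨ 5 ≤ l := by omega
    rcases h14 with h|h|h|h|h5
    · exact relX2_base q hq l (by omega) c p r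
    · exact relX2_base q hq l (by omega) c p r
    · exact relX2_base q hq l (by omega) c p r
    · exact relX2_base q hq l (by omega) c p r
    · obtain ⟨m, rfl⟩ : ∃ m, l = m + 5 := ⟨l - 5, by omega⟩
      have IH := ihl (m+1) (by omega) (by omega) c p r
      have e5a : ∀ (p' : Bool) (r' : ZMod 4), PX2 q (m+5) p' r' = gam q * PX2 q (m+1) p' r' := fun _ _ => rfl
      have e5b : ∀ (p' : Bool) (r' : ZMod 4), PX2 q (m+5+1) p' r' = gam q * PX2 q (m+1+1) p' r' := fun _ _ => rfl
      have eL : (letX (m+5+1)) = (letX (m+1+1)) := by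
        rw [show m+5+1 = (m+1+1)+4 from rfl, letX_per]
      rw [eL]
      simp only [e5a, e5b]
      have e1 : (if c = p then (if r = 0 ∨ r = 2 then q ^ qbr c bY else 1) * (gam q * PX2 q (m+1) (!p) r) else 0)
          = gam q * (if c = p then (if r = 0 ∨ r = 2 then q ^ qbr c bY else 1) * PX2 q (m+1) (!p) r else 0) := by
        split <;> ring
      have e2 : (if c = nxV r then gam q * PX2 q (m+1) p (r + 1) else 0)
          = gam q * (if c = nxV r then PX2 q (m+1) p (r + 1) else 0) := ite_pull _ _ _
      rw [e1, e2, ← mul_add, IH, ite_pull]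

lemma relY1_base (q : F) (hq : q ≠ 0) (l : ℕ)
    (hl : l = 1 ∨ l = 2 ∨ l = 3 ∨ l = 4) (c p : Bool) (r : ZMod 4) :
    (if c = p then PY1 q l (!p) r else 0) +
    (if c = nxV r then (if p then 1 else q ^ qbr c bX) * PY1 q l p (r + 1) else 0)
    = if c = (!letX (l+1)) then PY1 q (l + 1) p r else 0 := by
  rcases hl with rfl|rfl|rfl|rfl <;> rcases c <;> rcases p <;>
    rcases zmod4_cases r with rfl|rfl|rfl|rfl <;>
    (try simp (config := { decide := true }) [PY1, gam, nxV0, nxV1, nxV2, nxV3, z4a, z4b, z4c, z4d,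
      ind0, ind1, ind2, ind3, iE0, iE1, iE2, iE3, bX, bY, qbr, letX,
      zpow_two', zpow_neg_two']) <;> (try field_simp) <;> (try ring) <;> (try norm_num)

lemma relY1 (q : F) (hq : q ≠ 0) : ∀ l, 1 ≤ l → ∀ (c p : Bool) (r : ZMod 4),
    (if c = p then PY1 q l (!p) r else 0) +
    (if c = nxV r then (if p then 1 else q ^ qbr c bX) * PY1 q l p (r + 1) else 0)
    = if c = (!letX (l+1)) then PY1 q (l + 1) p r else 0 := by
  intro l
  induction l using Nat.strong_induction_on with
  | _ l ihl =>
    intro hl c p r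
    have h14 : l = 1 ∨ l = 2 ∨ l = 3 ∨ l = 4 ∨ 5 ≤ l := by omega
    rcases h14 with h|h|h|h|h5
    · exact relY1_base q hq l (by omega) c p r
    · exact relY1_base q hq l (by omega) c p r
    · exact relY1_base q hq l (by omega) c p r
    · exact relY1_base q hq l (by omega) c p r
    · obtain ⟨m, rfl⟩ : ∃ m, l = m + 5 := ⟨l - 5, by omega⟩
      have IH := ihl (m+1) (by omega) (by omega) c p r
      have e5a : ∀ (p' : Bool) (r' : ZMod 4), PY1 q (m+5) p' r' = gam q * PY1 q (m+1) p' r' := fun _ _ => rfl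
      have e5b : ∀ (p' : Bool) (r' : ZMod 4), PY1 q (m+5+1) p' r' = gam q * PY1 q (m+1+1) p' r' := fun _ _ => rfl
      have eL : (!letX (m+5+1)) = (!letX (m+1+1)) := by
        rw [show m+5+1 = (m+1+1)+4 from rfl, letX_per]
      rw [eL]
      simp only [e5a, e5b]
      have e2 : (if c = nxV r then (if p = true then 1 else q ^ qbr c bX) * (gam q * PY1 q (m+1) p (r+1)) else 0)
          = gam q * (if c = nxV r then (if p = true then 1 else q ^ qbr c bX) * PY1 q (m+1) p (r+1) else 0) := by
        split <;> ring
      rw [ite_pull, e2, ← mul_add, IH, ite_pull]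

lemma relY2_base (q : F) (hq : q ≠ 0) (l : ℕ)
    (hl : l = 1 ∨ l = 2 ∨ l = 3 ∨ l = 4) (c p : Bool) (r : ZMod 4) :
    (if c = p then (if r = 0 ∨ r = 2 then q ^ qbr c bY else 1) * PY2 q l (!p) r else 0) +
    (if c = nxV r then PY2 q l p (r + 1) else 0)
    = if c = (!letX (l+1)) then PY2 q (l + 1) p r else 0 := by
  rcases hl with rfl|rfl|rfl|rfl <;> rcases c <;> rcases p <;>
    rcases zmod4_cases r with rfl|rfl|rfl|rfl <;>
    (try simp (config := { decide := true }) [PY2, gam, nxV0, nxV1, nxV2, nxV3, z4a, z4b, z4c, z4d,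
      ind0, ind1, ind2, ind3, iE0, iE1, iE2, iE3, bX, bY, qbr, letX,
      zpow_two', zpow_neg_two']) <;> (try field_simp) <;> (try ring) <;> (try norm_num)

lemma relY2 (q : F) (hq : q ≠ 0) : ∀ l, 1 ≤ l → ∀ (c p : Bool) (r : ZMod 4),
    (if c = p then (if r = 0 ∨ r = 2 then q ^ qbr c bY else 1) * PY2 q l (!p) r else 0) +
    (if c = nxV r then PY2 q l p (r + 1) else 0)
    = if c = (!letX (l+1)) then PY2 q (l + 1) p r else 0 := by
  intro l
  induction l using Nat.strong_induction_on with
  | _ l ihl =>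
    intro hl c p r
    have h14 : l = 1 ∨ l = 2 ∨ l = 3 ∨ l = 4 ∨ 5 ≤ l := by omega
    rcases h14 with h|h|h|h|h5
    · exact relY2_base q hq l (by omega) c p r
    · exact relY2_base q hq l (by omega) c p r
    · exact relY2_base q hq l (by omega) c p r
    · exact relY2_base q hq l (by omega) c p r
    · obtain ⟨m, rfl⟩ : ∃ m, l = m + 5 := ⟨l - 5, by omega⟩
      have IH := ihl (m+1) (by omega) (by omega) c p r
      have e5a : ∀ (p' : Bool) (r' : ZMod 4), PY2 q (m+5) p' r' = gam q * PY2 q (m+1) p' r' := fun _ _ => rfl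
      have e5b : ∀ (p' : Bool) (r' : ZMod 4), PY2 q (m+5+1) p' r' = gam q * PY2 q (m+1+1) p' r' := fun _ _ => rfl
      have eL : (!letX (m+5+1)) = (!letX (m+1+1)) := by
        rw [show m+5+1 = (m+1+1)+4 from rfl, letX_per]
      rw [eL]
      simp only [e5a, e5b]
      have e1 : (if c = p then (if r = 0 ∨ r = 2 then q ^ qbr c bY else 1) * (gam q * PY2 q (m+1) (!p) r) else 0)
          = gam q * (if c = p then (if r = 0 ∨ r = 2 then q ^ qbr c bY else 1) * PY2 q (m+1) (!p) r else 0) := by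
        split <;> ring
      have e2 : (if c = nxV r then gam q * PY2 q (m+1) p (r + 1) else 0)
          = gam q * (if c = nxV r then PY2 q (m+1) p (r + 1) else 0) := ite_pull _ _ _
      rw [e1, e2, ← mul_add, IH, ite_pull]

end Stmt19
namespace Stmt19
variable {F : Type*} [Field F]

lemma chain_ne (l : ℕ) (hl : 1 ≤ l) : chainX l ≠ chainY l := by
  obtain ⟨m, rfl⟩ : ∃ m, l = m + 1 := ⟨l - 1, by omega⟩
  rw [chainX, chainY]
  intro h
  injection h with h1 _
  rcases letX (m+1) <;> simp_all

lemma claimB1 (q : F) (hq : q ≠ 0) : ∀ (w : List Bool), w ≠ [] → ∀ (p : Bool) (r : ZMod 4),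
    psi1 q w p r = (if w = chainX w.length then PX1 q w.length p r else 0)
                 + (if w = chainY w.length then PY1 q w.length p r else 0) := by
  intro w
  induction w with
  | nil => intro h; exact absurd rfl h
  | cons c w ih =>
    intro _ p r
    cases w with
    | nil =>
      rcases c <;> rcases p <;> rcases zmod4_cases r with rfl|rfl|rfl|rfl <;>
        simp (config := { decide := true }) [psi1, chainX, chainY, letX, PX1, PY1,
          ind0, ind1, ind2, ind3, iE0, iE1, iE2, iE3,
          nxV0, nxV1, nxV2, nxV3, z4a, z4b, z4c, z4d, bX, bY, qbr]
    | cons c' w' =>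
      have hne : (c' :: w') ≠ [] := by simp
      have IH := ih hne
      rw [psi1, IH (!p) r, IH p (r + 1)]
      simp only [List.length_cons] at *
      set l := w'.length + 1 with hldef
      have hl1 : 1 ≤ l := by omega
      by_cases hX : (c' :: w') = chainX l
      · have hY : (c' :: w') ≠ chainY l := by rw [hX]; exact chain_ne l hl1
        rw [if_pos hX, if_pos hX, if_neg hY, if_neg hY, add_zero, add_zero]
        rw [relX1 q hq l hl1 c p r]
        have c1 : (c :: c' :: w' = chainX (l+1)) ↔ (c = letX (l+1)) := by
          rw [chainX]
          simp [List.cons.injEq, hX]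
        have c2 : ¬(c :: c' :: w' = chainY (l+1)) := by
          rw [chainY]
          simp [List.cons.injEq, hY]
        rw [if_congr c1 rfl rfl, if_neg c2, add_zero]
      · by_cases hYY : (c' :: w') = chainY l
        · rw [if_neg hX, if_neg hX, if_pos hYY, if_pos hYY, zero_add, zero_add]
          rw [relY1 q hq l hl1 c p r]
          have c1 : ¬(c :: c' :: w' = chainX (l+1)) := by
            rw [chainX]
            simp [List.cons.injEq, hX]
          have c2 : (c :: c' :: w' = chainY (l+1)) ↔ (c = !letX (l+1)) := by
            rw [chainY]
            simp [List.cons.injEq, hYY]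
          rw [if_congr c2 rfl rfl, if_neg c1, zero_add]
        · rw [if_neg hX, if_neg hX, if_neg hYY, if_neg hYY]
          have c1 : ¬(c :: c' :: w' = chainX (l+1)) := by
            rw [chainX]
            simp [List.cons.injEq, hX]
          have c2 : ¬(c :: c' :: w' = chainY (l+1)) := by
            rw [chainY]
            simp [List.cons.injEq, hYY]
          rw [if_neg c1, if_neg c2]
          simp

lemma claimB2 (q : F) (hq : q ≠ 0) : ∀ (w : List Bool), w ≠ [] → ∀ (p : Bool) (r : ZMod 4),
    psi2 q w p r = (if w = chainX w.length then PX2 q w.length p r else 0)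
                 + (if w = chainY w.length then PY2 q w.length p r else 0) := by
  intro w
  induction w with
  | nil => intro h; exact absurd rfl h
  | cons c w ih =>
    intro _ p r
    cases w with
    | nil =>
      rcases c <;> rcases p <;> rcases zmod4_cases r with rfl|rfl|rfl|rfl <;>
        simp (config := { decide := true }) [psi2, chainX, chainY, letX, PX2, PY2,
          ind0, ind1, ind2, ind3, iE0, iE1, iE2, iE3,
          nxV0, nxV1, nxV2, nxV3, z4a, z4b, z4c, z4d, bX, bY, qbr]
    | cons c' w' =>
      have hne : (c' :: w') ≠ [] := by simp
      have IH := ih hne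
      rw [psi2, IH (!p) r, IH p (r + 1)]
      simp only [List.length_cons] at *
      set l := w'.length + 1 with hldef
      have hl1 : 1 ≤ l := by omega
      by_cases hX : (c' :: w') = chainX l
      · have hY : (c' :: w') ≠ chainY l := by rw [hX]; exact chain_ne l hl1
        rw [if_pos hX, if_pos hX, if_neg hY, if_neg hY, add_zero, add_zero]
        rw [relX2 q hq l hl1 c p r]
        have c1 : (c :: c' :: w' = chainX (l+1)) ↔ (c = letX (l+1)) := by
          rw [chainX]
          simp [List.cons.injEq, hX]
        have c2 : ¬(c :: c' :: w' = chainY (l+1)) := by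
          rw [chainY]
          simp [List.cons.injEq, hY]
        rw [if_congr c1 rfl rfl, if_neg c2, add_zero]
      · by_cases hYY : (c' :: w') = chainY l
        · rw [if_neg hX, if_neg hX, if_pos hYY, if_pos hYY, zero_add, zero_add]
          rw [relY2 q hq l hl1 c p r]
          have c1 : ¬(c :: c' :: w' = chainX (l+1)) := by
            rw [chainX]
            simp [List.cons.injEq, hX]
          have c2 : (c :: c' :: w' = chainY (l+1)) ↔ (c = !letX (l+1)) := by
            rw [chainY]
            simp [List.cons.injEq, hYY]
          rw [if_congr c2 rfl rfl, if_neg c1, zero_add]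
        · rw [if_neg hX, if_neg hX, if_neg hYY, if_neg hYY]
          have c1 : ¬(c :: c' :: w' = chainX (l+1)) := by
            rw [chainX]
            simp [List.cons.injEq, hX]
          have c2 : ¬(c :: c' :: w' = chainY (l+1)) := by
            rw [chainY]
            simp [List.cons.injEq, hYY]
          rw [if_neg c1, if_neg c2]
          simp

end Stmt19
namespace Stmt19
variable {F : Type*} [Field F]

lemma PX1_eval (q : F) (n : ℕ) : PX1 q (4*n+2) bX 0 = gam q ^ n := by
  induction n with
  | zero => simp [show 4*0+2 = 2 from rfl, PX1, iE0, bX]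
  | succ n ihn =>
    rw [show 4*(n+1)+2 = (4*n+1)+5 from by omega]
    rw [show PX1 q ((4*n+1)+5) bX 0 = gam q * PX1 q (4*n+2) bX 0 from rfl]
    rw [ihn, pow_succ]
    ring

lemma PY1_eval (q : F) (n : ℕ) : PY1 q (4*n+2) bX 0 = gam q ^ n * (q⁻¹)^2 := by
  induction n with
  | zero => simp [show 4*0+2 = 2 from rfl, PY1, iE0, bX]
  | succ n ihn =>
    rw [show 4*(n+1)+2 = (4*n+1)+5 from by omega]
    rw [show PY1 q ((4*n+1)+5) bX 0 = gam q * PY1 q (4*n+2) bX 0 from rfl]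
    rw [ihn, pow_succ]
    ring

lemma PX2_eval (q : F) (n : ℕ) : PX2 q (4*n+2) bX 0 = gam q ^ n * (q⁻¹)^2 := by
  induction n with
  | zero => simp [show 4*0+2 = 2 from rfl, PX2, iE0, bX]
  | succ n ihn =>
    rw [show 4*(n+1)+2 = (4*n+1)+5 from by omega]
    rw [show PX2 q ((4*n+1)+5) bX 0 = gam q * PX2 q (4*n+2) bX 0 from rfl]
    rw [ihn, pow_succ]
    ring

lemma PY2_eval (q : F) (n : ℕ) : PY2 q (4*n+2) bX 0 = gam q ^ n := by
  induction n with
  | zero => simp [show 4*0+2 = 2 from rfl, PY2, iE0, bX]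
  | succ n ihn =>
    rw [show 4*(n+1)+2 = (4*n+1)+5 from by omega]
    rw [show PY2 q ((4*n+1)+5) bX 0 = gam q * PY2 q (4*n+2) bX 0 from rfl]
    rw [ihn, pow_succ]
    ring

lemma alt_wpow_X (m : ℕ) : alt bX (2*m+1) = wpow wXY m ++ [bX] := by
  induction m with
  | zero => rfl
  | succ m ihm =>
    rw [show 2*(m+1)+1 = (2*m+1)+1+1 from by omega]
    rw [alt, alt, show (!bX) = bY from rfl, show (!bY) = bX from rfl, ihm]
    simp [wpow, wXY]

lemma alt_wpow_Y (m : ℕ) : alt bY (2*m+1) = wpow wYX m ++ [bY] := by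
  induction m with
  | zero => rfl
  | succ m ihm =>
    rw [show 2*(m+1)+1 = (2*m+1)+1+1 from by omega]
    rw [alt, alt, show (!bY) = bX from rfl, show (!bX) = bY from rfl, ihm]
    simp [wpow, wYX]

lemma chainX_word (n : ℕ) : chainX (4*n+2) = bX :: (wpow wYYXX n ++ [bY]) := by
  induction n with
  | zero => rfl
  | succ n ihn =>
    rw [show 4*(n+1)+2 = (4*n+2+1+1+1)+1 from by omega]
    rw [chainX, chainX, chainX, chainX, ihn]
    have e1 : letX (4*n+2+1+1+1+1) = bX := by
      unfold letX; rw [show (4*n+2+1+1+1+1) % 4 = 2 from by omega]; rfl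
    have e2 : letX (4*n+2+1+1+1) = bY := by
      unfold letX; rw [show (4*n+2+1+1+1) % 4 = 1 from by omega]; rfl
    have e3 : letX (4*n+2+1+1) = bY := by
      unfold letX; rw [show (4*n+2+1+1) % 4 = 0 from by omega]; rfl
    have e4 : letX (4*n+2+1) = bX := by
      unfold letX; rw [show (4*n+2+1) % 4 = 3 from by omega]; rfl
    rw [e1, e2, e3, e4]
    simp [wpow, wYYXX]

lemma wpow_len (w : List Bool) (n : ℕ) : (wpow w n).length = n * w.length := by
  induction n with
  | zero => simp [wpow]
  | succ n ihn => simp [wpow, ihn]; ring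

lemma sum_range_odd (M : ℕ) (g : ℕ → F) (h : ∀ k, g (2*k) = 0) :
    ∑ j ∈ Finset.range (2*M+1), g j = ∑ k ∈ Finset.range M, g (2*k+1) := by
  induction M with
  | zero => simpa using h 0
  | succ M ihM =>
    rw [show 2*(M+1)+1 = (2*M+1)+1+1 from by omega]
    rw [Finset.sum_range_succ, Finset.sum_range_succ, ihM,
      show (2*M+1)+1 = 2*(M+1) from by omega, h (M+1), add_zero,
      Finset.sum_range_succ]

lemma ind_even (k : ℕ) : ind F ((2*k : ℕ) : ZMod 4) = 0 := by
  have : ((2*k : ℕ) : ZMod 4) = 2 * (k : ZMod 4) := by push_cast; ring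
  rw [this]
  apply ind_eq_zero
  rcases zmod4_cases (k : ZMod 4) with h|h|h|h <;> rw [h] <;> decide

lemma ind_odd (k : ℕ) : ind F ((2*k+1 : ℕ) : ZMod 4) = (-1)^k := by
  rcases Nat.even_or_odd k with ⟨t, rfl⟩ | ⟨t, rfl⟩
  · have e : ((2*(t+t)+1 : ℕ) : ZMod 4) = 1 := by
      push_cast
      rw [show ((2:ZMod 4)*((t:ZMod 4)+(t:ZMod 4))+1) = 4*(t : ZMod 4)+1 from by ring]
      rw [show (4 : ZMod 4) = 0 from rfl]
      ring
    rw [e, ind1, Even.neg_one_pow ⟨t, rfl⟩]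
  · have e : ((2*(2*t+1)+1 : ℕ) : ZMod 4) = 3 := by
      push_cast
      rw [show ((2:ZMod 4)*(2*(t:ZMod 4)+1)+1) = 4*(t : ZMod 4)+3 from by ring]
      rw [show (4 : ZMod 4) = 0 from rfl]
      ring
    rw [e, ind3, Odd.neg_one_pow ⟨t, rfl⟩]

lemma final_scalar (q : F) (hq : q ≠ 0) (h2 : q^2 ≠ 1) (A B : F) (n : ℕ) :
    (1 - (q⁻¹)^2)⁻¹ * (q * (gam q ^ n * A + gam q ^ n * (q⁻¹)^2 * B)
      - q⁻¹ * (gam q ^ n * (q⁻¹)^2 * A + gam q ^ n * B))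
    = (-1)^n * (q+q⁻¹)^(2*n+1) * A := by
  have hv : q * q⁻¹ = 1 := mul_inv_cancel₀ hq
  have hne : (1 - (q⁻¹)^2) ≠ 0 := by
    intro h
    apply h2
    have : (q⁻¹)^2 = 1 := by linear_combination -h
    calc q^2 = q^2 * (q⁻¹)^2 := by rw [this, mul_one]
    _ = 1 := by rw [← mul_pow, hv, one_pow]
  have hg : gam q ^ n = (-1)^n * ((q+q⁻¹)^2)^n := by
    rw [gam, neg_pow]
  have key : (1 - (q⁻¹)^2)⁻¹ * (q * (A + (q⁻¹)^2 * B) - q⁻¹ * ((q⁻¹)^2 * A + B))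
      = (q+q⁻¹) * A := by
    rw [inv_mul_eq_iff_eq_mul₀ hne]
    field_simp
    ring
  calc (1 - (q⁻¹)^2)⁻¹ * (q * (gam q ^ n * A + gam q ^ n * (q⁻¹)^2 * B)
      - q⁻¹ * (gam q ^ n * (q⁻¹)^2 * A + gam q ^ n * B))
      = gam q ^ n * ((1 - (q⁻¹)^2)⁻¹ *
          (q * (A + (q⁻¹)^2 * B) - q⁻¹ * ((q⁻¹)^2 * A + B))) := by ring
    _ = gam q ^ n * ((q+q⁻¹) * A) := by rw [key]
    _ = (-1)^n * (q+q⁻¹)^(2*n+1) * A := by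
        rw [hg, ← pow_mul, pow_succ]
        ring
end Stmt19

open Stmt19 in
/-- `(−1)^n [2]_q^{2n+1} x(yyxx)^n y = (1 − q^{-2})^{-1} Σ_{k=0}^{2n} (−1)^k [W_{k−2n}, W_{k+1}]_q`,
where `W_{k−2n} = (xy)^{2n−k} x`, `W_{k+1} = (yx)^k y`, and `[X,Y]_q = q X⋆Y − q^{-1} Y⋆X`. -/
theorem stmt19 {F : Type*} [Field F] [CharZero F] (q : F) (hq : q ≠ 0)
    (hq1 : ∀ m : ℕ, 0 < m → q ^ m ≠ 1) (n : ℕ) :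
    ((-1 : F) ^ n * (q + q⁻¹) ^ (2 * n + 1)) •
        Finsupp.single ([bX] ++ wpow wYYXX n ++ [bY]) (1 : F)
      = (1 - q ^ (-2 : ℤ))⁻¹ •
          ∑ k ∈ Finset.range (2 * n + 1),
            ((-1 : F) ^ k) •
              (q • qsh q (wpow wXY (2 * n - k) ++ [bX]) (wpow wYX k ++ [bY])
                - q⁻¹ • qsh q (wpow wYX k ++ [bY]) (wpow wXY (2 * n - k) ++ [bX])) := by
  classical
  have h2 : q ^ 2 ≠ 1 := hq1 2 (by norm_num)
  ext w
  simp only [Finsupp.smul_apply, Finsupp.finset_sum_apply, Finsupp.sub_apply,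
    Finsupp.single_apply, smul_eq_mul]
  by_cases hlen : w.length = 4 * n + 2
  · -- main case
    have hw : w ≠ [] := by intro h; subst h; simp at hlen
    have hparA : (w.length + (if bX then 1 else 0) + (0 : ZMod 4).val) % 2 = 0 := by
      rw [hlen, val0, show (if bX then 1 else 0) = 0 from rfl]
      omega
    have cA : ∑ k ∈ Finset.range (2*n+1),
        (-1:F)^k * qsh q (wpow wXY (2*n-k) ++ [bX]) (wpow wYX k ++ [bY]) w
        = psi1 q w bX 0 := by
      rw [← lemA1 q w bX 0 hparA, hlen,
        show 4*n+2+1 = 2*(2*n+1)+1 from by omega]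
      have hOdd := sum_range_odd (2*n+1)
        (fun j => ind F ((0:ZMod 4) + (j : ZMod 4)) *
          qsh q (alt bX (4*n+2 - j)) (alt (nxV 0) j) w)
        (fun k => by simp only [zero_add, ind_even, zero_mul])
      rw [hOdd]
      apply Finset.sum_congr rfl
      intro k hk
      have hk' : k < 2*n+1 := Finset.mem_range.mp hk
      show (-1:F)^k * qsh q (wpow wXY (2*n-k) ++ [bX]) (wpow wYX k ++ [bY]) w
        = ind F ((0:ZMod 4) + ((2*k+1 : ℕ) : ZMod 4)) *
            qsh q (alt bX (4*n+2 - (2*k+1))) (alt (nxV 0) (2*k+1)) w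
      rw [zero_add, ind_odd, show nxV 0 = bY from rfl,
        show 4*n+2 - (2*k+1) = 2*(2*n-k)+1 from by omega, alt_wpow_X, alt_wpow_Y]
    have cB : ∑ k ∈ Finset.range (2*n+1),
        (-1:F)^k * qsh q (wpow wYX k ++ [bY]) (wpow wXY (2*n-k) ++ [bX]) w
        = psi2 q w bX 0 := by
      rw [← lemA2 q w bX 0 hparA, hlen,
        show 4*n+2+1 = 2*(2*n+1)+1 from by omega]
      have hOdd := sum_range_odd (2*n+1)
        (fun j => ind F ((0:ZMod 4) + (j : ZMod 4)) *
          qsh q (alt (nxV 0) j) (alt bX (4*n+2 - j)) w)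
        (fun k => by simp only [zero_add, ind_even, zero_mul])
      rw [hOdd]
      apply Finset.sum_congr rfl
      intro k hk
      have hk' : k < 2*n+1 := Finset.mem_range.mp hk
      show (-1:F)^k * qsh q (wpow wYX k ++ [bY]) (wpow wXY (2*n-k) ++ [bX]) w
        = ind F ((0:ZMod 4) + ((2*k+1 : ℕ) : ZMod 4)) *
            qsh q (alt (nxV 0) (2*k+1)) (alt bX (4*n+2 - (2*k+1))) w
      rw [zero_add, ind_odd, show nxV 0 = bY from rfl,
        show 4*n+2 - (2*k+1) = 2*(2*n-k)+1 from by omega, alt_wpow_X, alt_wpow_Y]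
    have esum : ∑ k ∈ Finset.range (2*n+1),
        (-1:F)^k * (q * qsh q (wpow wXY (2*n-k) ++ [bX]) (wpow wYX k ++ [bY]) w
          - q⁻¹ * qsh q (wpow wYX k ++ [bY]) (wpow wXY (2*n-k) ++ [bX]) w)
        = q * psi1 q w bX 0 - q⁻¹ * psi2 q w bX 0 := by
      rw [← cA, ← cB, Finset.mul_sum, Finset.mul_sum, ← Finset.sum_sub_distrib]
      apply Finset.sum_congr rfl
      intro k _
      ring
    rw [esum]
    rw [claimB1 q hq w hw bX 0, claimB2 q hq w hw bX 0, hlen,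
      PX1_eval, PY1_eval, PX2_eval, PY2_eval]
    have t1 : (if w = chainX (4*n+2) then gam q ^ n else 0)
        = gam q ^ n * (if w = chainX (4*n+2) then (1:F) else 0) := by split <;> simp
    have t2 : (if w = chainY (4*n+2) then gam q ^ n * (q⁻¹)^2 else 0)
        = gam q ^ n * (q⁻¹)^2 * (if w = chainY (4*n+2) then (1:F) else 0) := by
      split <;> simp
    have t3 : (if w = chainX (4*n+2) then gam q ^ n * (q⁻¹)^2 else 0)
        = gam q ^ n * (q⁻¹)^2 * (if w = chainX (4*n+2) then (1:F) else 0) := by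
      split <;> simp
    have t4 : (if w = chainY (4*n+2) then gam q ^ n else 0)
        = gam q ^ n * (if w = chainY (4*n+2) then (1:F) else 0) := by split <;> simp
    rw [t1, t2, t3, t4]
    have hident : ([bX] ++ wpow wYYXX n ++ [bY]) = chainX (4*n+2) := by
      rw [chainX_word]
      simp
    rw [hident]
    rw [if_congr (eq_comm (a := chainX (4*n+2)) (b := w)) rfl rfl]
    rw [zpow_neg_two' q]
    rw [final_scalar q hq h2
      (if w = chainX (4*n+2) then (1:F) else 0)
      (if w = chainY (4*n+2) then (1:F) else 0) n]
  · -- length mismatch: both sides zero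
    have hL : ([bX] ++ wpow wYYXX n ++ [bY]).length = 4*n+2 := by
      simp [wpow_len, wYYXX]
      omega
    rw [if_neg (fun h => hlen (by rw [← h]; exact hL)), mul_zero]
    have hz : ∀ k ∈ Finset.range (2*n+1),
        (-1:F)^k * (q * qsh q (wpow wXY (2*n-k) ++ [bX]) (wpow wYX k ++ [bY]) w
          - q⁻¹ * qsh q (wpow wYX k ++ [bY]) (wpow wXY (2*n-k) ++ [bX]) w) = 0 := by
      intro k hk
      have hk' : k < 2*n+1 := Finset.mem_range.mp hk
      have l1 : (wpow wXY (2*n-k) ++ [bX]).length = 2*(2*n-k)+1 := by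
        simp [wpow_len, wXY]
        omega
      have l2 : (wpow wYX k ++ [bY]).length = 2*k+1 := by
        simp [wpow_len, wYX]
        omega
      rw [qsh_apply_ne q w (wpow wXY (2*n-k) ++ [bX]) (wpow wYX k ++ [bY])
          (by rw [l1, l2]; omega),
        qsh_apply_ne q w (wpow wYX k ++ [bY]) (wpow wXY (2*n-k) ++ [bX])
          (by rw [l1, l2]; omega)]
      simp
    rw [Finset.sum_eq_zero hz, mul_zero]
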